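/- arXiv:1505.00036 — 3 statements merged into one kernel-verified Lean document; each statement's English description precedes it below -/
import Mathlib

section
/- Let v be a linear classifier on [0,1]^n with weights w and threshold q, and suppose w_i > w_j > 0. If x ∈ Piv_j(b) \ Piv_i(b) for some b ∈ [0,1], then x_i > x_j. -/
open MeasureTheory

/-- The linear classifier on ℝ^n with weights w and threshold q. -/
noncomputable def linClass {n : ℕ} (w : Fin n → ℝ) (q : ℝ) (x : Fin n → ℝ) : ℝ :=
  if q ≤ ∑ k, w k * x k then 1 else 0

/-- The unit cube [0,1]^n. -/
def unitCube (n : ℕ) : Set (Fin n → ℝ) := Set.univ.pi fun _ => Set.Icc 0 1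

/-- Piv_i(b): points of the cube that are losing but become winning when
coordinate i is set to b. -/
noncomputable def pivSet {n : ℕ} (w : Fin n → ℝ) (q : ℝ) (i : Fin n) (b : ℝ) :
    Set (Fin n → ℝ) :=
  {x | x ∈ unitCube n ∧ linClass w q x = 0 ∧
    linClass w q (Function.update x i b) = 1}

/-!
Setting coordinate `k` of `x` to `b` changes the score `w ⬝ x` by `w k * (b - x k)`. For
`x ∈ Piv_j(b)` this gain lifts the score from below `q` to at least `q`, while `x ∉ Piv_i(b)`
means the gain `w i * (b - x i)` does not. Hence `0 < w j * (b - x j) ≤ w i * (b - x j)` and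
`w i * (b - x i) < w i * (b - x j)`, so `x j < x i`.
-/

theorem Fintype.sum_mul_update {ι R : Type*} [Fintype ι] [DecidableEq ι] [CommRing R]
    (w x : ι → R) (i : ι) (b : R) :
    ∑ k, w k * Function.update x i b k = ∑ k, w k * x k + w i * (b - x i) := by
  simp only [Pi.update_eq_sub_add_single, Pi.add_apply, Pi.sub_apply, Pi.single_apply, mul_add,
    mul_sub, mul_ite, mul_zero, Finset.sum_add_distrib, Finset.sum_sub_distrib, Finset.sum_ite_eq',
    Finset.mem_univ, if_true]
  ring

section

variable {n : ℕ} {w : Fin n → ℝ} {q : ℝ}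

theorem linClass_eq_zero_iff {x : Fin n → ℝ} : linClass w q x = 0 ↔ ∑ k, w k * x k < q := by
  simp [linClass]

theorem linClass_eq_one_iff {x : Fin n → ℝ} : linClass w q x = 1 ↔ q ≤ ∑ k, w k * x k := by
  simp [linClass]

theorem mem_pivSet_iff {i : Fin n} {b : ℝ} {x : Fin n → ℝ} :
    x ∈ pivSet w q i b ↔
      x ∈ unitCube n ∧ ∑ k, w k * x k < q ∧ q ≤ ∑ k, w k * x k + w i * (b - x i) := by
  rw [pivSet, Set.mem_ofPred_eq, linClass_eq_zero_iff, linClass_eq_one_iff,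
    Fintype.sum_mul_update]

end

theorem pivSet_diff_coord_gt_general
    {n : ℕ} (w : Fin n → ℝ) (q : ℝ)
    (i j : Fin n) (hij : w j < w i) (hj : 0 < w j)
    (b : ℝ)
    (x : Fin n → ℝ) (hx : x ∈ pivSet w q j b) (hx' : x ∉ pivSet w q i b) :
    x j < x i := by
  obtain ⟨hcube, hlose, hwin_j⟩ := mem_pivSet_iff.1 hx
  have hlose_i : ∑ k, w k * x k + w i * (b - x i) < q :=
    lt_of_not_ge fun hwin_i => hx' (mem_pivSet_iff.2 ⟨hcube, hlose, hwin_i⟩)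
  have hxj : x j < b := sub_pos.1 (pos_of_mul_pos_right (by linarith) hj.le)
  have hgain : w i * (b - x i) < w i * (b - x j) :=
    calc w i * (b - x i) < w j * (b - x j) := by linarith
      _ < w i * (b - x j) := mul_lt_mul_of_pos_right hij (sub_pos.2 hxj)
  linarith [lt_of_mul_lt_mul_left hgain (hj.trans hij).le]

/-- If w_i > w_j > 0 and x ∈ Piv_j(b) \ Piv_i(b), then x_i > x_j. -/
theorem pivSet_diff_coord_gt
    {n : ℕ} (hn : 1 ≤ n) (w : Fin n → ℝ) (q : ℝ) (hw : ∀ k, w k ≠ 0)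
    (i j : Fin n) (hij : w j < w i) (hj : 0 < w j)
    (b : ℝ) (hb : b ∈ Set.Icc (0 : ℝ) 1)
    (x : Fin n → ℝ) (hx : x ∈ pivSet w q j b) (hx' : x ∉ pivSet w q i b) :
    x j < x i :=
  pivSet_diff_coord_gt_general w q i j hij hj b x hx hx'
end

section
/- Let v be a linear classifier on [0,1]^n with weights w and threshold q. For every feature i: Vol(Piv_i) = Vol(APiv_i), and the influence of i satisfies χ_i = 2 · Vol(Piv_i). -/
/-!
The map `T (x, b) = ((x_{-i}, b), x_i)` is a volume-preserving involution of `ℝⁿ × ℝ`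
(in the coordinates `(x_{-i}, x_i, b)` it swaps the last two), and it maps `Piv_i` onto
`APiv_i`; this gives `Vol(Piv_i) = Vol(APiv_i)`. Since `v` only takes the values `0` and `1`,
the integrand of `χ_i` is the indicator of the set where changing `x_i` to `b` changes the
classification, so by Fubini `χ_i` is the volume of that set inside `[0,1]^{n+1}`, which is the
disjoint union `Piv_i ∪ APiv_i`.
-/

open MeasureTheory

/-- The influence χ_i = ∫_0^1 ∫_{[0,1]^n} |v(x_{-i}, b) − v(x)| dx db. -/
noncomputable def chiLin {n : ℕ} (w : Fin n → ℝ) (q : ℝ) (i : Fin n) : ℝ :=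
  ∫ b in Set.Icc (0 : ℝ) 1,
    ∫ x in unitCube n, |linClass w q (Function.update x i b) - linClass w q x|

/-- APiv_i(b): points of the cube that are winning but become losing when
coordinate i is set to b. -/
noncomputable def apivSet {n : ℕ} (w : Fin n → ℝ) (q : ℝ) (i : Fin n) (b : ℝ) :
    Set (Fin n → ℝ) :=
  {x | x ∈ unitCube n ∧ linClass w q x = 1 ∧
    linClass w q (Function.update x i b) = 0}

/-- Piv_i ⊆ [0,1]^{n+1}: pairs (x, b) with x ∈ Piv_i(b). -/
noncomputable def piv {n : ℕ} (w : Fin n → ℝ) (q : ℝ) (i : Fin n) :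
    Set ((Fin n → ℝ) × ℝ) :=
  {p | p.2 ∈ Set.Icc (0 : ℝ) 1 ∧ p.1 ∈ pivSet w q i p.2}

/-- APiv_i ⊆ [0,1]^{n+1}: pairs (x, b) with x ∈ APiv_i(b). -/
noncomputable def apiv {n : ℕ} (w : Fin n → ℝ) (q : ℝ) (i : Fin n) :
    Set ((Fin n → ℝ) × ℝ) :=
  {p | p.2 ∈ Set.Icc (0 : ℝ) 1 ∧ p.1 ∈ apivSet w q i p.2}

open Set Function

lemma measurable_linClass {n : ℕ} (w : Fin n → ℝ) (q : ℝ) : Measurable (linClass w q) :=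
  Measurable.ite (measurableSet_le measurable_const (by fun_prop)) measurable_const
    measurable_const

lemma linClass_eq_zero_or_one {n : ℕ} (w : Fin n → ℝ) (q : ℝ) (x : Fin n → ℝ) :
    linClass w q x = 0 ∨ linClass w q x = 1 := by
  unfold linClass; split_ifs <;> simp

lemma measurableSet_unitCube (n : ℕ) : MeasurableSet (unitCube n) :=
  MeasurableSet.univ_pi fun _ => measurableSet_Icc

lemma volume_unitCube (n : ℕ) : volume (unitCube n) = 1 := by
  rw [unitCube, volume_pi_pi]; simp [Real.volume_Icc]

lemma update_mem_unitCube_and_iff {n : ℕ} (x : Fin n → ℝ) (i : Fin n) (b : ℝ) :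
    update x i b ∈ unitCube n ∧ x i ∈ Icc 0 1 ↔ x ∈ unitCube n ∧ b ∈ Icc 0 1 := by
  have hx : (∀ j, x j ∈ Icc (0 : ℝ) 1) ↔ x i ∈ Icc 0 1 ∧ ∀ j ≠ i, x j ∈ Icc 0 1 := by
    simpa only [update_eq_self] using
      forall_update_iff x (a := i) (b := x i) fun _ y => y ∈ Icc 0 1
  simp only [unitCube, mem_univ_pi]
  rw [forall_update_iff x fun _ y => y ∈ Icc 0 1, hx]
  tauto

theorem measurePreserving_update_swap {n : ℕ} (i : Fin n) :
    MeasurePreserving (fun p : (Fin n → ℝ) × ℝ => (update p.1 i p.2, p.1 i)) volume volume := by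
  rcases n with _ | m
  · exact i.elim0
  let e := MeasurableEquiv.piFinSuccAbove (fun _ : Fin (m + 1) => ℝ) i
  have he : MeasurePreserving e := volume_preserving_piFinSuccAbove _ i
  have hfactor : (fun p : (Fin (m + 1) → ℝ) × ℝ => (update p.1 i p.2, p.1 i)) =
      Prod.map e.symm id ∘ MeasurableEquiv.prodAssoc.symm ∘ Prod.map id Prod.swap ∘
        Prod.swap ∘ Prod.map e id := by
    funext p
    simp [e, MeasurableEquiv.piFinSuccAbove, MeasurableEquiv.prodAssoc, Fin.insertNthEquiv]
  rw [hfactor]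
  exact (he.symm.prod (.id _)).comp <| volume_preserving_prodAssoc.symm.comp <|
    ((MeasurePreserving.id _).prod Measure.measurePreserving_swap).comp <|
      Measure.measurePreserving_swap.comp (he.prod (.id _))

section Pivotal

variable {n : ℕ} (w : Fin n → ℝ) (q : ℝ) (i : Fin n)

lemma preimage_update_swap_apiv :
    (fun p : (Fin n → ℝ) × ℝ => (update p.1 i p.2, p.1 i)) ⁻¹' apiv w q i = piv w q i := by
  ext ⟨x, b⟩
  simp only [mem_preimage, apiv, piv, pivSet, apivSet, mem_ofPred_eq, update_idem,
    update_eq_self]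
  rw [← and_assoc, and_comm (a := x i ∈ _), update_mem_unitCube_and_iff]
  tauto

lemma measurableSet_apiv : MeasurableSet (apiv w q i) := by
  have hv := measurable_linClass w q
  exact (measurable_snd measurableSet_Icc).inter <|
    (measurable_fst (measurableSet_unitCube n)).inter <|
      (hv.comp measurable_fst (measurableSet_singleton 1)).inter
        (hv.comp measurable_update' (measurableSet_singleton 0))

lemma volume_piv_eq_volume_apiv : volume (piv w q i) = volume (apiv w q i) := by
  rw [← preimage_update_swap_apiv,
    (measurePreserving_update_swap i).measure_preimage (measurableSet_apiv w q i).nullMeasurableSet]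

lemma volume_apiv_ne_top : volume (apiv w q i) ≠ ⊤ := by
  refine measure_ne_top_of_subset (s := unitCube n ×ˢ Icc 0 1) (fun p hp => ⟨hp.2.1, hp.1⟩) ?_
  simp [Measure.volume_eq_prod, Measure.prod_prod, volume_unitCube]

lemma disjoint_piv_apiv : Disjoint (piv w q i) (apiv w q i) := by
  rw [disjoint_left]
  rintro p ⟨-, -, h0, -⟩ ⟨-, -, h1, -⟩
  simp [h0] at h1

def switchSet : Set ((Fin n → ℝ) × ℝ) :=
  {p | linClass w q (update p.1 i p.2) ≠ linClass w q p.1}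

lemma measurableSet_switchSet : MeasurableSet (switchSet w q i) :=
  (measurableSet_eq_fun ((measurable_linClass w q).comp measurable_update')
    ((measurable_linClass w q).comp measurable_fst)).compl

lemma abs_linClass_update_sub (x : Fin n → ℝ) (b : ℝ) :
    |linClass w q (update x i b) - linClass w q x| = (switchSet w q i).indicator 1 (x, b) := by
  rcases linClass_eq_zero_or_one w q (update x i b) with h1 | h1 <;>
    rcases linClass_eq_zero_or_one w q x with h2 | h2 <;>
    simp [switchSet, h1, h2]

lemma switchSet_inter_box : switchSet w q i ∩ unitCube n ×ˢ Icc 0 1 = piv w q i ∪ apiv w q i := by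
  ext ⟨x, b⟩
  simp only [switchSet, piv, apiv, pivSet, apivSet, mem_inter_iff, mem_prod, mem_union,
    mem_ofPred_eq]
  rcases linClass_eq_zero_or_one w q (update x i b) with h1 | h1 <;>
    rcases linClass_eq_zero_or_one w q x with h2 | h2 <;>
    simp [h1, h2] <;> tauto

lemma chiLin_eq_measureReal_piv_union_apiv :
    chiLin w q i = volume.real (piv w q i ∪ apiv w q i) := by
  have hS := measurableSet_switchSet w q i
  have : IsFiniteMeasure (volume.restrict (unitCube n)) :=
    isFiniteMeasure_restrict.2 (by simp [volume_unitCube])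
  calc chiLin w q i
      = ∫ b in Icc 0 1, ∫ x in unitCube n, (switchSet w q i).indicator 1 (x, b) := by
        simp only [chiLin, abs_linClass_update_sub]
    _ = ∫ p in unitCube n ×ˢ Icc 0 1, (switchSet w q i).indicator 1 p := by
        rw [Measure.volume_eq_prod, ← Measure.prod_restrict, integral_prod_symm]
        exact (integrable_const 1).indicator hS
    _ = volume.real (piv w q i ∪ apiv w q i) := by
        rw [integral_indicator_one hS, measureReal_restrict_apply hS, switchSet_inter_box]

end Pivotal

theorem chiLin_eq_two_vol_piv_general
    {n : ℕ} (w : Fin n → ℝ) (q : ℝ)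
    (i : Fin n) :
    volume (piv w q i) = volume (apiv w q i) ∧
    chiLin w q i = 2 * (volume (piv w q i)).toReal := by
  have hvol := volume_piv_eq_volume_apiv w q i
  have hfin := volume_apiv_ne_top w q i
  refine ⟨hvol, ?_⟩
  rw [chiLin_eq_measureReal_piv_union_apiv, measureReal_union (disjoint_piv_apiv w q i)
    (measurableSet_apiv w q i) (hvol ▸ hfin) hfin, measureReal_def, measureReal_def, hvol]
  ring

/-- Vol(Piv_i) = Vol(APiv_i) and χ_i = 2 · Vol(Piv_i). -/
theorem chiLin_eq_two_vol_piv
    {n : ℕ} (hn : 1 ≤ n) (w : Fin n → ℝ) (q : ℝ) (hw : ∀ k, w k ≠ 0)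
    (i : Fin n) :
    volume (piv w q i) = volume (apiv w q i) ∧
    chiLin w q i = 2 * (volume (piv w q i)).toReal :=
  chiLin_eq_two_vol_piv_general w q i
end

section
/- For every binary classifier v : A → {0,1}, every weight function w : A → ℝ and every feature i ∈ N: ∑_{a ∈ A} w(a) ∑_{b ∈ A_i} w(a_{-i}, b) · |v(a_{-i}, b) − v(a)| = 2 · ∑_{a_{-i} ∈ A_{-i}} w(W_{a_{-i}}) · w(L_{a_{-i}}), where w(W_{a_{-i}}) = ∑_{b ∈ A_i : v(a_{-i},b) = 1} w(a_{-i}, b) and w(L_{a_{-i}}) = ∑_{b ∈ A_i : v(a_{-i},b) = 0} w(a_{-i}, b). -/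
/-!
Splitting each profile as `(a_{-i}, c)` makes the identity fibrewise: for a fixed partial profile
the left side is `∑_c ∑_b w c * w b * |r b - r c|` with `r = v ∈ {0, 1}`. Since
`|r b - r c| = r b + r c - 2 r b r c` on `{0, 1}`, this double sum is `2 W T - 2 W²`, where
`W = ∑ w b r b` is the winning weight and `T` the total weight, i.e. `2 W L` with `L = T - W`.
-/

/-- Combine a partial profile (omitting feature i) with a state b of feature i
into a full profile. -/
def combineProfile {ι : Type*} [DecidableEq ι] {A : ι → Type*}
    (i : ι) (f : ∀ j : {j : ι // j ≠ i}, A j.1) (b : A i) : ∀ k, A k :=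
  fun k => if h : k = i then cast (congrArg A h).symm b else f ⟨k, h⟩

open Finset

section FinTwo

variable {α : Type*} [Fintype α] (w : α → ℝ) (x : α → Fin 2)

lemma abs_natCast_sub_natCast_fin_two (u v : Fin 2) :
    |((u : ℕ) : ℝ) - ((v : ℕ) : ℝ)|
      = ((u : ℕ) : ℝ) + ((v : ℕ) : ℝ) - 2 * ((u : ℕ) : ℝ) * ((v : ℕ) : ℝ) := by
  fin_cases u <;> fin_cases v <;> norm_num

lemma sum_filter_eq_one_eq_sum_mul :
    ∑ b ∈ univ.filter (fun b => x b = 1), w b = ∑ b, w b * ((x b : ℕ) : ℝ) := by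
  rw [sum_filter]
  refine sum_congr rfl fun b _ => ?_
  rcases Fin.exists_fin_two.mp ⟨x b, rfl⟩ with h | h <;> simp [h]

lemma sum_filter_eq_zero_eq_sum_sub_sum_mul :
    ∑ b ∈ univ.filter (fun b => x b = 0), w b = ∑ b, w b - ∑ b, w b * ((x b : ℕ) : ℝ) := by
  rw [← sum_sub_distrib, sum_filter]
  refine sum_congr rfl fun b _ => ?_
  rcases Fin.exists_fin_two.mp ⟨x b, rfl⟩ with h | h <;> simp [h]

theorem sum_mul_sum_mul_abs_sub_fin_two :
    ∑ c, w c * ∑ b, w b * |((x b : ℕ) : ℝ) - ((x c : ℕ) : ℝ)|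
      = 2 * ((∑ b ∈ univ.filter (fun b => x b = 1), w b)
          * ∑ b ∈ univ.filter (fun b => x b = 0), w b) := by
  set r : α → ℝ := fun b => ((x b : ℕ) : ℝ)
  rw [sum_filter_eq_one_eq_sum_mul, sum_filter_eq_zero_eq_sum_sub_sum_mul]
  calc ∑ c, w c * ∑ b, w b * |r b - r c|
      = ∑ c, ∑ b, (w c * (w b * r b) + w c * r c * w b - 2 * (w c * r c * (w b * r b))) := by
        refine sum_congr rfl fun c _ => ?_
        rw [mul_sum]
        refine sum_congr rfl fun b _ => ?_
        rw [abs_natCast_sub_natCast_fin_two]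
        ring
    _ = (∑ c, w c) * (∑ b, w b * r b) + (∑ c, w c * r c) * (∑ b, w b)
          - 2 * ((∑ c, w c * r c) * (∑ b, w b * r b)) := by
        rw [sum_mul_sum, sum_mul_sum, sum_mul_sum, mul_sum, ← sum_add_distrib, ← sum_sub_distrib]
        refine sum_congr rfl fun c _ => ?_
        rw [mul_sum, ← sum_add_distrib, ← sum_sub_distrib]
    _ = _ := by ring

end FinTwo

section Profiles

variable {ι : Type*} [DecidableEq ι] {A : ι → Type*}

lemma piSplitAt_symm_eq_combineProfile (i : ι) (f : ∀ j : {j : ι // j ≠ i}, A j.1) (b : A i) :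
    (Equiv.piSplitAt i A).symm (b, f) = combineProfile i f b := by
  funext k
  simp only [Equiv.piSplitAt_symm_apply, combineProfile]
  split
  · subst_vars; rfl
  · rfl

lemma update_combineProfile_self (i : ι) (f : ∀ j : {j : ι // j ≠ i}, A j.1) (c b : A i) :
    Function.update (combineProfile i f c) i b = combineProfile i f b := by
  funext k
  rcases eq_or_ne k i with rfl | h
  · simp [combineProfile]
  · simp [Function.update, combineProfile, h]

lemma sum_eq_sum_sum_combineProfile [Fintype ι] [∀ i, Fintype (A i)] {M : Type*}
    [AddCommMonoid M] (i : ι) (F : (∀ j, A j) → M) :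
    ∑ a, F a = ∑ f : (∀ j : {j : ι // j ≠ i}, A j.1), ∑ b, F (combineProfile i f b) := by
  rw [← (Equiv.piSplitAt i A).symm.sum_comp, Fintype.sum_prod_type, sum_comm]
  simp only [piSplitAt_symm_eq_combineProfile]

end Profiles

theorem weighted_win_loss_product_identity_general
    {ι : Type*} [Fintype ι] [DecidableEq ι]
    {A : ι → Type*} [∀ i, Fintype (A i)]
    (v : (∀ j, A j) → Fin 2) (w : (∀ j, A j) → ℝ) (i : ι) :
    ∑ a : ∀ j, A j, w a * ∑ b : A i,
        w (Function.update a i b) *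
          |((v (Function.update a i b) : ℕ) : ℝ) - ((v a : ℕ) : ℝ)|
      = 2 * ∑ f : (∀ j : {j : ι // j ≠ i}, A j.1),
          (∑ b ∈ Finset.univ.filter (fun b : A i => v (combineProfile i f b) = 1),
              w (combineProfile i f b))
            * (∑ b ∈ Finset.univ.filter (fun b : A i => v (combineProfile i f b) = 0),
              w (combineProfile i f b)) := by
  rw [sum_eq_sum_sum_combineProfile i, mul_sum]
  refine sum_congr rfl fun f _ => ?_
  simp only [update_combineProfile_self]
  exact sum_mul_sum_mul_abs_sub_fin_two _ _

/-- Weighted win/loss product identity: for every binary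
classifier v, weight function w and feature i,
∑_a w(a) ∑_b w(a_{-i},b)·|v(a_{-i},b) − v(a)|
  = 2 ∑_{a_{-i}} w(W_{a_{-i}}) · w(L_{a_{-i}}). -/
theorem weighted_win_loss_product_identity
    {ι : Type*} [Fintype ι] [DecidableEq ι]
    {A : ι → Type*} [∀ i, Fintype (A i)] [∀ i, DecidableEq (A i)]
    [∀ i, Nonempty (A i)]
    (v : (∀ j, A j) → Fin 2) (w : (∀ j, A j) → ℝ) (i : ι) :
    ∑ a : ∀ j, A j, w a * ∑ b : A i,
        w (Function.update a i b) *
          |((v (Function.update a i b) : ℕ) : ℝ) - ((v a : ℕ) : ℝ)|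
      = 2 * ∑ f : (∀ j : {j : ι // j ≠ i}, A j.1),
          (∑ b ∈ Finset.univ.filter (fun b : A i => v (combineProfile i f b) = 1),
              w (combineProfile i f b))
            * (∑ b ∈ Finset.univ.filter (fun b : A i => v (combineProfile i f b) = 0),
              w (combineProfile i f b)) :=
  weighted_win_loss_product_identity_general v w i
end
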